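/- arXiv:1909.08647 — 6 statements merged into one kernel-verified Lean document; each statement's English description precedes it below -/
import Mathlib

section
/- Let k be an infinite field of characteristic zero and S := k[X₀,X₁,X₂]. Let P ∈ S be a nonzero homogeneous polynomial, Q₁, Q₂ ∈ S nonconstant homogeneous polynomials of degrees q₁, q₂, and v = (a₀,…,a_r) a tuple of homogeneous polynomials of a common degree. Set N := \binom{r+1}{2}. Then P divides q₂^N·Q₂^N·W_{∂_{P,Q₁}}(v) − q₁^N·Q₁^N·W_{∂_{P,Q₂}}(v). -/
/-!
Write `detDer a b = (a × b)·∇`, so that `∂_{P,Q} = (∇P × ∇Q)·∇`, and let `E = X·∇` be the Euler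
derivation and `J = det(∇P, ∇Q₁, ∇Q₂)`. The vector identity
`(x·c)(a×b) − (x·b)(a×c) = det(a,b,c) x − (x·a)(b×c)`, applied to `x = X`, `a = ∇P`, `b = ∇Q₁`,
`c = ∇Q₂`, together with Euler's formula `X·∇F = (deg F) F`, shows that the derivations
`q₂Q₂ ∂_{P,Q₁}` and `q₁Q₁ ∂_{P,Q₂} + J E` differ by a multiple of `P`. The first one kills `P`,
so their Wronskians agree modulo `P`.

Since `[E, ∂_{P,Q}] = (p + q − 3) ∂_{P,Q}`, `E` acts on `∂_{P,Q}^l(aⱼ)` as the scalar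
`e + l(p + q − 3)`. Hence the matrix of iterates of `h ∂ + g E` is a lower triangular matrix with
diagonal `1, h, …, h^r` times the matrix of iterates of `∂`, and its Wronskian is `h^N W_∂(v)`.
With `h = q₂Q₂, g = 0` and `h = q₁Q₁, g = J` this identifies the two Wronskians above with the two
terms of the difference.
-/

open MvPolynomial

noncomputable section

/-- The Wronskian of a tuple `v` with respect to a derivation `D`. -/
def wronskian {R A : Type*} [CommRing R] [CommRing A] [Algebra R A]
    (D : Derivation R A A) {n : ℕ} (v : Fin n → A) : A :=
  Matrix.det (Matrix.of fun i j : Fin n => (⇑D)^[(i : ℕ)] (v j))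

/-- The derivation `det[(a₀,a₁,a₂);(b₀,b₁,b₂);∇]`. -/
def detDer {R : Type*} [CommRing R] (a b : Fin 3 → MvPolynomial (Fin 3) R) :
    Derivation R (MvPolynomial (Fin 3) R) (MvPolynomial (Fin 3) R) :=
  MvPolynomial.mkDerivation R
    ![a 1 * b 2 - a 2 * b 1, -(a 0 * b 2 - a 2 * b 0), a 0 * b 1 - a 1 * b 0]

/-- The derivation `∂_{P,Q}`. -/
def delPQ {R : Type*} [CommRing R] (P Q : MvPolynomial (Fin 3) R) :
    Derivation R (MvPolynomial (Fin 3) R) (MvPolynomial (Fin 3) R) :=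
  detDer (fun j => pderiv j P) (fun j => pderiv j Q)

section Derivation

variable {R A : Type*} [CommRing R] [CommRing A] [Algebra R A]

theorem Derivation.dvd_iterate_sub_iterate (D D' : Derivation R A A) {a : A} (ha : a ∣ D a)
    (h : ∀ x, a ∣ D x - D' x) (l : ℕ) (x : A) : a ∣ D^[l] x - D'^[l] x := by
  induction l with
  | zero => simp
  | succ l ih =>
    obtain ⟨y, hy⟩ := ih
    have hDy : D^[l + 1] x - D'^[l + 1] x = D (a * y) + (D (D'^[l] x) - D' (D'^[l] x)) := by
      rw [Function.iterate_succ_apply', Function.iterate_succ_apply', ← hy, map_sub]; ring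
    rw [hDy, Derivation.leibniz, smul_eq_mul, smul_eq_mul]
    exact dvd_add (dvd_add (dvd_mul_right a _) (ha.mul_left y)) (h _)

theorem dvd_wronskian_sub_wronskian (D D' : Derivation R A A) {a : A} (ha : a ∣ D a)
    (h : ∀ x, a ∣ D x - D' x) {n : ℕ} (v : Fin n → A) :
    a ∣ wronskian D v - wronskian D' v := by
  simp only [← Ideal.mem_span_singleton, ← Ideal.Quotient.eq, wronskian, RingHom.map_det]
  congr 1
  ext i j
  exact Ideal.Quotient.eq.mpr
    (Ideal.mem_span_singleton.mpr (D.dvd_iterate_sub_iterate D' ha h i (v j)))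

theorem Derivation.apply_iterate_of_commutator_eq_smul {E D : Derivation R A A} {c m : R}
    (hED : ⁅E, D⁆ = c • D) {x : A} (hx : E x = m • x) (l : ℕ) :
    E (D^[l] x) = (m + l * c) • D^[l] x := by
  induction l with
  | zero => simpa using hx
  | succ l ih =>
    have hcomm := congr($hED (D^[l] x))
    rw [Derivation.commutator_apply, ih, Derivation.smul_apply, map_smul] at hcomm
    rw [Function.iterate_succ_apply', eq_add_of_sub_eq hcomm]
    module

theorem Derivation.exists_iterate_eq_sum (B D : Derivation R A A) (h : A) (g : ℕ → A)
    {ι : Type*} (v : ι → A)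
    (hB : ∀ l j, B (D^[l] (v j)) = h * D^[l + 1] (v j) + g l * D^[l] (v j)) (i : ℕ) :
    ∃ c : ℕ → A, c i = h ^ i ∧ (∀ l, i < l → c l = 0) ∧
      ∀ j, B^[i] (v j) = ∑ l ∈ Finset.range (i + 1), c l * D^[l] (v j) := by
  induction i with
  | zero => exact ⟨fun l => if l = 0 then 1 else 0, by simp, fun l hl => by simp [hl.ne'],
      fun j => by simp⟩
  | succ i ih =>
    obtain ⟨c, hci, hc0, hc⟩ := ih
    refine ⟨fun l => B (c l) + c l * g l + if l = 0 then 0 else h * c (l - 1), ?_, ?_, ?_⟩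
    · simp [hc0, hci, pow_succ, mul_comm]
    · intro l hl
      simp [hc0 l (by omega), hc0 (l - 1) (by omega), show l ≠ 0 by omega]
    · intro j
      have hterm : ∀ l, B (c l * D^[l] (v j)) =
          (B (c l) + c l * g l) * D^[l] (v j) + h * c l * D^[l + 1] (v j) := by
        intro l
        rw [Derivation.leibniz, hB, smul_eq_mul, smul_eq_mul]
        ring
      have htop : ∑ l ∈ Finset.range (i + 2), (B (c l) + c l * g l) * D^[l] (v j) =
          ∑ l ∈ Finset.range (i + 1), (B (c l) + c l * g l) * D^[l] (v j) := by
        simp [Finset.sum_range_succ _ (i + 1), hc0 (i + 1) (by omega)]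
      have hshift : ∑ l ∈ Finset.range (i + 2),
          (if l = 0 then 0 else h * c (l - 1)) * D^[l] (v j) =
          ∑ l ∈ Finset.range (i + 1), h * c l * D^[l + 1] (v j) := by
        simp [Finset.sum_range_succ' _ (i + 1)]
      rw [Function.iterate_succ_apply', hc, map_sum]
      simp only [add_mul _ (ite _ _ _), Finset.sum_add_distrib, htop, hshift, hterm]

theorem wronskian_eq_pow_mul_wronskian (B D : Derivation R A A) (h : A) (g : ℕ → A) {n : ℕ}
    (v : Fin n → A) (hB : ∀ l j, B (D^[l] (v j)) = h * D^[l + 1] (v j) + g l * D^[l] (v j)) :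
    wronskian B v = h ^ n.choose 2 * wronskian D v := by
  choose c hdiag hzero hsum using B.exists_iterate_eq_sum D h g v hB
  let L : Matrix (Fin n) (Fin n) A := Matrix.of fun i l => c i l
  have hmul : Matrix.of (fun i j : Fin n => B^[i] (v j)) =
      L * Matrix.of fun l j : Fin n => D^[l] (v j) := by
    ext i j
    rw [Matrix.of_apply, hsum, Matrix.mul_apply]
    simp only [L, Matrix.of_apply]
    rw [Fin.sum_univ_eq_sum_range (fun l => c i l * D^[l] (v j))]
    refine Finset.sum_subset (by simp) fun l _ hl => ?_
    simp [hzero i l (by simp at hl; omega)]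
  have hL : L.det = h ^ n.choose 2 := by
    rw [Matrix.det_of_isLowerTriangular L fun i l hil => hzero i l hil]
    simp only [L, Matrix.of_apply, hdiag, Finset.prod_pow_eq_pow_sum]
    rw [Fin.sum_univ_eq_sum_range (fun i => i) n, Finset.sum_range_id, Nat.choose_two_right]
  rw [wronskian, hmul, Matrix.det_mul, hL, wronskian]

end Derivation

namespace MvPolynomial

section Euler

variable {σ R : Type*} [CommRing R]

variable (σ R) in
def eulerDerivation : Derivation R (MvPolynomial σ R) (MvPolynomial σ R) :=
  mkDerivation R X

@[simp]
theorem eulerDerivation_X (i : σ) : eulerDerivation σ R (X i) = X i :=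
  mkDerivation_X R X i

theorem derivation_apply_eq_sum [Fintype σ]
    (D : Derivation R (MvPolynomial σ R) (MvPolynomial σ R)) (f : MvPolynomial σ R) :
    D f = ∑ i, D (X i) * pderiv i f := by
  classical
  induction f using MvPolynomial.induction_on with
  | C a => simp
  | add f g hf hg => simp [hf, hg, mul_add, Finset.sum_add_distrib]
  | mul_X f j hf =>
    simp [hf, pderiv_X, Pi.single_apply, mul_add, Finset.sum_add_distrib, Finset.mul_sum,
      mul_left_comm, mul_comm f]

theorem IsHomogeneous.eulerDerivation_eq [Fintype σ] {f : MvPolynomial σ R} {n : ℕ}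
    (hf : f.IsHomogeneous n) : eulerDerivation σ R f = (n : R) • f := by
  rw [derivation_apply_eq_sum, Nat.cast_smul_eq_nsmul, ← hf.sum_X_mul_pderiv]
  simp

theorem commutator_pderiv_eulerDerivation (i : σ) :
    ⁅pderiv (R := R) i, eulerDerivation σ R⁆ = pderiv i := by
  classical
  refine derivation_ext fun j => ?_
  rcases eq_or_ne j i with rfl | hji <;> simp [Derivation.commutator_apply, pderiv_X, *]

theorem eulerDerivation_pderiv {f : MvPolynomial σ R} {m : R}
    (hf : eulerDerivation σ R f = m • f) (i : σ) :
    eulerDerivation σ R (pderiv i f) = (m - 1) • pderiv i f := by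
  have h := congr($(commutator_pderiv_eulerDerivation (σ := σ) (R := R) i) f)
  rw [Derivation.commutator_apply, hf, Derivation.map_smul] at h
  calc _ = m • pderiv i f - (m • pderiv i f - eulerDerivation σ R (pderiv i f)) := by abel
    _ = _ := by rw [h, sub_smul, one_smul]

end Euler

end MvPolynomial

section DetDer

open Matrix

variable {R : Type*} [CommRing R]

theorem detDer_X (a b : Fin 3 → MvPolynomial (Fin 3) R) (t : Fin 3) :
    detDer a b (X t) =
      ![a 1 * b 2 - a 2 * b 1, -(a 0 * b 2 - a 2 * b 0), a 0 * b 1 - a 1 * b 0] t :=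
  mkDerivation_X R _ t

theorem commutator_eulerDerivation_detDer {a b : Fin 3 → MvPolynomial (Fin 3) R} {α β : R}
    (ha : ∀ i, eulerDerivation (Fin 3) R (a i) = α • a i)
    (hb : ∀ i, eulerDerivation (Fin 3) R (b i) = β • b i) :
    ⁅eulerDerivation (Fin 3) R, detDer a b⁆ = (α + β - 1) • detDer a b := by
  refine derivation_ext fun t => ?_
  fin_cases t <;>
    simp only [Fin.reduceFinMk, Fin.isValue, detDer_X, cons_val, Derivation.commutator_apply,
      eulerDerivation_X, map_neg, map_sub, Derivation.leibniz, ha, hb, Derivation.smul_apply,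
      smul_eq_C_mul, smul_eq_mul, C_add, C_1] <;>
    ring

theorem commutator_eulerDerivation_delPQ {P Q : MvPolynomial (Fin 3) R} {p q : ℕ}
    (hP : P.IsHomogeneous p) (hQ : Q.IsHomogeneous q) :
    ⁅eulerDerivation (Fin 3) R, delPQ P Q⁆ = ((p : R) + q - 3) • delPQ P Q := by
  rw [delPQ, commutator_eulerDerivation_detDer (eulerDerivation_pderiv hP.eulerDerivation_eq)
    (eulerDerivation_pderiv hQ.eulerDerivation_eq)]
  congr 1
  ring

theorem delPQ_apply_self (P Q : MvPolynomial (Fin 3) R) : delPQ P Q P = 0 := by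
  rw [derivation_apply_eq_sum, Fin.sum_univ_three, delPQ, detDer_X, detDer_X, detDer_X]
  simp only [Fin.isValue, cons_val]
  ring

theorem smul_detDer_sub_smul_detDer (a b c x : Fin 3 → MvPolynomial (Fin 3) R) :
    (x ⬝ᵥ c) • detDer a b - (x ⬝ᵥ b) • detDer a c =
      det (Matrix.of ![a, b, c]) • mkDerivation R x - (x ⬝ᵥ a) • detDer b c := by
  refine derivation_ext fun t => ?_
  rw [det_fin_three]
  fin_cases t <;>
    simp only [Fin.reduceFinMk, Fin.isValue, Derivation.sub_apply, Derivation.smul_apply, detDer_X,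
      mkDerivation_X, cons_val, of_apply, dotProduct, Fin.sum_univ_three, smul_eq_mul] <;>
    ring

theorem smul_delPQ_sub_smul_delPQ {P Q1 Q2 : MvPolynomial (Fin 3) R} {p q1 q2 : ℕ}
    (hP : P.IsHomogeneous p) (hQ1 : Q1.IsHomogeneous q1) (hQ2 : Q2.IsHomogeneous q2) :
    (q2 * Q2) • delPQ P Q1 - ((q1 * Q1) • delPQ P Q2 +
      det (Matrix.of ![fun i => pderiv i P, fun i => pderiv i Q1, fun i => pderiv i Q2]) •
        eulerDerivation (Fin 3) R) =
      P • (-(p : MvPolynomial (Fin 3) R) • delPQ Q1 Q2) := by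
  have hEuler {f : MvPolynomial (Fin 3) R} {m : ℕ} (hf : f.IsHomogeneous m) :
      (X ⬝ᵥ fun i => pderiv i f) = (m : MvPolynomial (Fin 3) R) * f := by
    simp [dotProduct, hf.sum_X_mul_pderiv]
  have h := smul_detDer_sub_smul_detDer (fun i => pderiv i P) (fun i => pderiv i Q1)
    (fun i => pderiv i Q2) X
  rw [hEuler hP, hEuler hQ1, hEuler hQ2] at h
  rw [delPQ, delPQ, delPQ, ← sub_sub, h, smul_smul, eulerDerivation]
  module

end DetDer

theorem dvd_wronskian_delPQ_sub_general {k : Type*} [Field k]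
    (P : MvPolynomial (Fin 3) k) (p : ℕ) (hPhom : P.IsHomogeneous p)
    (Q1 Q2 : MvPolynomial (Fin 3) k) (q1 q2 : ℕ)
    (hQ1hom : Q1.IsHomogeneous q1) (hQ2hom : Q2.IsHomogeneous q2)
    {r : ℕ} (v : Fin (r + 1) → MvPolynomial (Fin 3) k) (e : ℕ)
    (hv : ∀ j, (v j).IsHomogeneous e) :
    P ∣ (q2 : MvPolynomial (Fin 3) k) ^ Nat.choose (r + 1) 2 * Q2 ^ Nat.choose (r + 1) 2 *
          wronskian (delPQ P Q1) v
        - (q1 : MvPolynomial (Fin 3) k) ^ Nat.choose (r + 1) 2 * Q1 ^ Nat.choose (r + 1) 2 *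
          wronskian (delPQ P Q2) v := by
  set E := eulerDerivation (Fin 3) k
  set J := Matrix.det (Matrix.of ![fun i => pderiv i P, fun i => pderiv i Q1, fun i => pderiv i Q2])
  have hEv : ∀ l j, E ((delPQ P Q2)^[l] (v j)) =
      ((e : k) + l * ((p : k) + q2 - 3)) • (delPQ P Q2)^[l] (v j) :=
    fun l j => Derivation.apply_iterate_of_commutator_eq_smul
      (commutator_eulerDerivation_delPQ hPhom hQ2hom) (hv j).eulerDerivation_eq l
  have hW1 : wronskian ((q2 * Q2) • delPQ P Q1) v =
      (q2 * Q2) ^ (r + 1).choose 2 * wronskian (delPQ P Q1) v :=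
    wronskian_eq_pow_mul_wronskian _ _ _ (fun _ => 0) v fun l j => by
      simp [Function.iterate_succ_apply']
  have hW2 : wronskian ((q1 * Q1) • delPQ P Q2 + J • E) v =
      (q1 * Q1) ^ (r + 1).choose 2 * wronskian (delPQ P Q2) v :=
    wronskian_eq_pow_mul_wronskian _ _ _ (fun l => J * C ((e : k) + l * ((p : k) + q2 - 3))) v
      fun l j => by
        simp only [Derivation.add_apply, Derivation.smul_apply, hEv, smul_eq_C_mul,
          smul_eq_mul, C_add, C_mul, map_natCast, C_sub, Function.iterate_succ_apply']
        ring
  have hdvd := dvd_wronskian_sub_wronskian ((q2 * Q2) • delPQ P Q1)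
    ((q1 * Q1) • delPQ P Q2 + J • E) (by simp [delPQ_apply_self])
    (fun x => ⟨_, congr($(smul_delPQ_sub_smul_delPQ hPhom hQ1hom hQ2hom) x)⟩) v
  rwa [hW1, hW2, mul_pow, mul_pow] at hdvd

/-- Let `k` be an infinite field of characteristic zero, `S := k[X₀,X₁,X₂]`,
`P ∈ S` a nonzero homogeneous polynomial, `Q₁, Q₂ ∈ S` nonconstant homogeneous polynomials of
degrees `q₁, q₂`, and `v = (a₀,…,a_r)` a tuple of homogeneous polynomials of a common degree.
With `N := binom (r+1) 2`, `P` divides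
`q₂^N·Q₂^N·W_{∂_{P,Q₁}}(v) − q₁^N·Q₁^N·W_{∂_{P,Q₂}}(v)`. -/
theorem dvd_wronskian_delPQ_sub {k : Type*} [Field k] [CharZero k] [Infinite k]
    (P : MvPolynomial (Fin 3) k) (p : ℕ) (hPne : P ≠ 0) (hPhom : P.IsHomogeneous p)
    (Q1 Q2 : MvPolynomial (Fin 3) k) (q1 q2 : ℕ) (hq1 : 0 < q1) (hq2 : 0 < q2)
    (hQ1ne : Q1 ≠ 0) (hQ2ne : Q2 ≠ 0)
    (hQ1hom : Q1.IsHomogeneous q1) (hQ2hom : Q2.IsHomogeneous q2)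
    {r : ℕ} (v : Fin (r + 1) → MvPolynomial (Fin 3) k) (e : ℕ)
    (hv : ∀ j, (v j).IsHomogeneous e) :
    P ∣ (q2 : MvPolynomial (Fin 3) k) ^ Nat.choose (r + 1) 2 * Q2 ^ Nat.choose (r + 1) 2 *
          wronskian (delPQ P Q1) v
        - (q1 : MvPolynomial (Fin 3) k) ^ Nat.choose (r + 1) 2 * Q1 ^ Nat.choose (r + 1) 2 *
          wronskian (delPQ P Q2) v :=
  dvd_wronskian_delPQ_sub_general P p hPhom Q1 Q2 q1 q2 hQ1hom hQ2hom v e hv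
end
end

section
/- Let k be an algebraically closed field of characteristic zero and S := k[X₀,X₁,X₂]. Let P ∈ S be a nonzero squarefree homogeneous polynomial and Q ∈ S a nonconstant homogeneous polynomial with gcd(P,Q) = 1. Then gcd(∂_{P,Q}, P) = 1; that is, P has no common nonunit factor with the three polynomials Xᵢ·G_j − X_j·Gᵢ (0 ≤ i < j ≤ 2), where G₀, G₁, G₂ are the coefficients of ∂_{P,Q} = G₀∂₀ + G₁∂₁ + G₂∂₂. -/
open MvPolynomial

noncomputable section

/-- `gcd(∂, F) = 1` for a derivation with coefficient tuple `G`: every common factor of `F`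
and the three minors `Xᵢ·G_j − X_j·Gᵢ` (`i < j`) is a unit. -/
def coeffsPrimeTo {R : Type*} [CommRing R] (G : Fin 3 → MvPolynomial (Fin 3) R)
    (F : MvPolynomial (Fin 3) R) : Prop :=
  ∀ z : MvPolynomial (Fin 3) R, z ∣ F →
    (∀ i j : Fin 3, i < j → z ∣ (X i * G j - X j * G i)) → IsUnit z

/-!
Let `r` be an irreducible common factor of `P` and the minors. By Euler's identity the minors
are, up to sign, `q Q ∂ₗP − p P ∂ₗQ`, so `r ∣ ∂ₗP` for every `l` because `r ∤ Q`. Writing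
`P = r t`, squarefreeness gives `r ∤ t`, and the Leibniz rule turns `r ∣ ∂ₗ(r t)` into
`r ∣ ∂ₗr`. Since `∂ₗr` has smaller total degree than `r`, all `∂ₗr` vanish, which in
characteristic zero forces `r` to be constant.
-/

namespace MvPolynomial

variable {σ R : Type*}

theorem totalDegree_pderiv_lt [CommSemiring R] {f : MvPolynomial σ R} {i : σ}
    (h : pderiv i f ≠ 0) : (pderiv i f).totalDegree < f.totalDegree := by
  obtain ⟨m, hm, hmax⟩ := Finset.exists_mem_eq_sup _ (support_nonempty.2 h)
    fun s : σ →₀ ℕ => s.sum fun _ e => e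
  have hcoeff : coeff (m + Finsupp.single i 1) f ≠ 0 := by
    rw [mem_support_iff, coeff_pderiv] at hm
    exact left_ne_zero_of_mul hm
  calc (pderiv i f).totalDegree = m.degree := hmax
    _ < (m + Finsupp.single i 1).degree := by simp
    _ ≤ f.totalDegree := le_totalDegree (mem_support_iff.2 hcoeff)

theorem exists_pderiv_ne_zero [CommSemiring R] [NoZeroDivisors R] [CharZero R]
    {f : MvPolynomial σ R} (h : f.totalDegree ≠ 0) : ∃ i, pderiv i f ≠ 0 := by
  obtain ⟨m, hm, i, hi⟩ : ∃ m ∈ f.support, ∃ i, m i ≠ 0 := by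
    simpa [totalDegree_eq_zero_iff] using h
  refine ⟨i, fun h0 => ?_⟩
  have hcoeff := coeff_pderiv (i := i) f (m - Finsupp.single i 1)
  rw [tsub_add_cancel_of_le (Finsupp.single_le_iff.2 (Nat.one_le_iff_ne_zero.2 hi)), h0,
    coeff_zero] at hcoeff
  exact mem_support_iff.1 hm <|
    (mul_eq_zero.1 hcoeff.symm).resolve_right (Nat.cast_add_one_ne_zero _)

theorem isUnit_of_forall_dvd_pderiv [Field R] [CharZero R] {f : MvPolynomial σ R}
    (hf : f ≠ 0) (h : ∀ i, f ∣ pderiv i f) : IsUnit f := by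
  have hdeg : f.totalDegree = 0 := by
    by_contra hpos
    obtain ⟨i, hi⟩ := exists_pderiv_ne_zero hpos
    exact (totalDegree_pderiv_lt hi).not_ge (totalDegree_le_of_dvd_of_isDomain (h i) hi)
  rw [totalDegree_eq_zero_iff_eq_C] at hdeg
  rw [hdeg] at hf ⊢
  exact (isUnit_iff_ne_zero.2 (C_ne_zero.1 hf)).map C

theorem IsHomogeneous.sum_X_mul_pderiv_fin_three [CommRing R] {φ : MvPolynomial (Fin 3) R}
    {n : ℕ} (h : φ.IsHomogeneous n) :
    X 0 * pderiv 0 φ + X 1 * pderiv 1 φ + X 2 * pderiv 2 φ =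
      (n : MvPolynomial (Fin 3) R) * φ := by
  rw [← Fin.sum_univ_three (fun i => X i * pderiv i φ), h.sum_X_mul_pderiv, nsmul_eq_mul]

end MvPolynomial

theorem Prime.dvd_derivation_self {R A : Type*} [CommSemiring R] [CommRing A] [Algebra R A]
    (D : Derivation R A A) {r a : A} (hr : Prime r) (hra : r ∣ a) (hsq : ¬ r * r ∣ a)
    (hDa : r ∣ D a) : r ∣ D r := by
  obtain ⟨t, rfl⟩ := hra
  have hrt : ¬ r ∣ t := fun ht => hsq (mul_dvd_mul_left r ht)
  rw [Derivation.leibniz, smul_eq_mul, smul_eq_mul,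
    (dvd_add_right (dvd_mul_right r _)).eq] at hDa
  exact (hr.dvd_or_dvd hDa).resolve_left hrt

section Minors

variable {R : Type*} [CommRing R] {P Q : MvPolynomial (Fin 3) R} {p q : ℕ}

theorem dvd_sub_of_dvd_delPQ_minors (hP : P.IsHomogeneous p) (hQ : Q.IsHomogeneous q)
    {r : MvPolynomial (Fin 3) R}
    (hr : ∀ i j : Fin 3, i < j → r ∣ X i * delPQ P Q (X j) - X j * delPQ P Q (X i))
    (l : Fin 3) :
    r ∣ (q : MvPolynomial (Fin 3) R) * Q * pderiv l P -
      (p : MvPolynomial (Fin 3) R) * P * pderiv l Q := by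
  have hEP := hP.sum_X_mul_pderiv_fin_three
  have hEQ := hQ.sum_X_mul_pderiv_fin_three
  simp only [delPQ, detDer, mkDerivation_X] at hr
  fin_cases l
  · convert hr 1 2 (by decide) using 1
    simp only [Fin.zero_eta, Matrix.cons_val]
    linear_combination (pderiv 0 Q) * hEP - (pderiv 0 P) * hEQ
  · convert (hr 0 2 (by decide)).neg_right using 1
    simp only [Fin.mk_one, Matrix.cons_val]
    linear_combination (pderiv 1 Q) * hEP - (pderiv 1 P) * hEQ
  · convert hr 0 1 (by decide) using 1
    simp only [Fin.reduceFinMk, Matrix.cons_val]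
    linear_combination (pderiv 2 Q) * hEP - (pderiv 2 P) * hEQ

end Minors

theorem Prime.dvd_pderiv_of_dvd_delPQ_minors {k : Type*} [Field k] [CharZero k]
    {P Q r : MvPolynomial (Fin 3) k} {p q : ℕ} (hP : P.IsHomogeneous p)
    (hQ : Q.IsHomogeneous q) (hq : 0 < q) (hPQ : IsRelPrime P Q) (hr : Prime r) (hrP : r ∣ P)
    (hminors : ∀ i j : Fin 3, i < j → r ∣ X i * delPQ P Q (X j) - X j * delPQ P Q (X i))
    (l : Fin 3) : r ∣ pderiv l P := by
  have hqQ : r ∣ (q : MvPolynomial (Fin 3) k) * (Q * pderiv l P) := by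
    rw [← mul_assoc, ← dvd_sub_left ((hrP.mul_left _).mul_right _)]
    exact dvd_sub_of_dvd_delPQ_minors hP hQ hminors l
  have hq_unit : IsUnit (q : MvPolynomial (Fin 3) k) := by
    simpa using (isUnit_iff_ne_zero.2 (Nat.cast_ne_zero.2 hq.ne' : (q : k) ≠ 0)).map C
  exact (hr.dvd_or_dvd (hq_unit.dvd_mul_left.1 hqQ)).resolve_left
    fun hrQ => hr.not_isUnit (hPQ hrP hrQ)

theorem delPQ_primeTo_of_squarefree_general {k : Type*} [Field k] [CharZero k]
    (P : MvPolynomial (Fin 3) k) (p : ℕ) (hPhom : P.IsHomogeneous p)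
    (hPsf : Squarefree P)
    (Q : MvPolynomial (Fin 3) k) (q : ℕ) (hq : 0 < q)
    (hQhom : Q.IsHomogeneous q) (hPQ : IsRelPrime P Q) :
    coeffsPrimeTo (fun i => delPQ P Q (X i)) P := by
  intro z hzP hminors
  by_contra hz
  obtain ⟨r, hr, hrz⟩ :=
    WfDvdMonoid.exists_irreducible_factor hz (ne_zero_of_dvd_ne_zero hPsf.ne_zero hzP)
  have hrP : r ∣ P := hrz.trans hzP
  have hdP (l : Fin 3) : r ∣ pderiv l P :=
    hr.prime.dvd_pderiv_of_dvd_delPQ_minors hPhom hQhom hq hPQ hrP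
      (fun i j hij => hrz.trans (hminors i j hij)) l
  have hdr (l : Fin 3) : r ∣ pderiv l r :=
    hr.prime.dvd_derivation_self _ hrP (fun h => hr.not_isUnit (hPsf r h)) (hdP l)
  exact hr.not_isUnit (isUnit_of_forall_dvd_pderiv hr.ne_zero hdr)

/-- Let `k` be an algebraically closed field of characteristic zero and
`S := k[X₀,X₁,X₂]`.  Let `P ∈ S` be a nonzero squarefree homogeneous polynomial and `Q ∈ S` a
nonconstant homogeneous polynomial with `gcd(P,Q) = 1`.  Then `gcd(∂_{P,Q}, P) = 1`: `P` has no
common nonunit factor with the three polynomials `Xᵢ·G_j − X_j·Gᵢ`, where `G₀,G₁,G₂` are the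
coefficients of `∂_{P,Q}`. -/
theorem delPQ_primeTo_of_squarefree {k : Type*} [Field k] [IsAlgClosed k] [CharZero k]
    (P : MvPolynomial (Fin 3) k) (p : ℕ) (hPne : P ≠ 0) (hPhom : P.IsHomogeneous p)
    (hPsf : Squarefree P)
    (Q : MvPolynomial (Fin 3) k) (q : ℕ) (hq : 0 < q) (hQne : Q ≠ 0)
    (hQhom : Q.IsHomogeneous q) (hPQ : IsRelPrime P Q) :
    coeffsPrimeTo (fun i => delPQ P Q (X i)) P :=
  delPQ_primeTo_of_squarefree_general P p hPhom hPsf Q q hq hQhom hPQ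
end
end

section
/- Let k be an algebraically closed field of characteristic zero and S := k[X₀,X₁,X₂]. Let F(t) = F₀ + t·H(t) ∈ S[[t]] be homogeneous of positive degree with F₀ ≠ 0, let F₀ = ∏ᵢ Eᵢ^{eᵢ} be its factorization into distinct irreducibles, set Dⱼ := ∂ⱼ(F₀)/∏ᵢ Eᵢ^{eᵢ−1}, and let ∂(0) := det[(D₀,D₁,D₂); ∇H(0); ∇] be the reduced F(t)-derivation evaluated at t = 0. If gcd(F₀, H(0)) = 1, then gcd(∂(0), F₀) = 1. -/
open MvPolynomial

noncomputable section

/-! If an irreducible factor `P` of `F₀` divided the three minors, it would divide every component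
of `X × (D × ∇h)`, `h = H(0)`. By the triple product expansion this vector is
`(X·∇h) D − (X·D) ∇h`, and Euler's identity gives `X·∇h = d h` and `X·D = d ∏ Eᵢ`. Since `P ∤ h`,
`P` divides every `Dⱼ`, so its full power `P^e` in `F₀` divides every `∂ⱼF₀`. In characteristic
zero this gives `P ∣ ∂ⱼP`, so `∂ⱼP = 0` by comparing degrees, and `P` would be constant. -/

open scoped Matrix

lemma Prime.dvd_derivation_of_pow_dvd {A R : Type*} [CommSemiring A] [CommRing R] [IsDomain R]
    [Algebra A R] (δ : Derivation A R R) {p q : R} {n : ℕ} (hp : Prime p) (hq : ¬ p ∣ q)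
    (hn : ¬ p ∣ (n : R)) (h : p ^ n ∣ δ (p ^ n * q)) : p ∣ δ p := by
  obtain ⟨n, rfl⟩ : ∃ m, n = m + 1 :=
    Nat.exists_eq_succ_of_ne_zero fun h0 => hn (by rw [h0, Nat.cast_zero]; exact dvd_zero p)
  have hexpand : δ (p ^ (n + 1) * q) = p ^ (n + 1) * δ q + p ^ n * (q * (n + 1 : ℕ) * δ p) := by
    rw [Derivation.leibniz, Derivation.leibniz_pow, smul_eq_mul, smul_eq_mul, nsmul_eq_mul,
      Nat.add_sub_cancel, smul_eq_mul]
    ring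
  have hdvd : p ^ n * p ∣ p ^ n * (q * (n + 1 : ℕ) * δ p) := by
    rw [← pow_succ]
    simpa [hexpand] using dvd_sub h (dvd_mul_right (p ^ (n + 1)) (δ q))
  rcases hp.dvd_or_dvd ((mul_dvd_mul_iff_left (pow_ne_zero n hp.ne_zero)).mp hdvd) with h' | h'
  · rcases hp.dvd_or_dvd h' with h'' | h''
    exacts [absurd h'' hq, absurd h'' hn]
  · exact h'

lemma Prime.not_dvd_prod_erase_pow {α ι : Type*} [CommMonoidWithZero α] [IsCancelMulZero α]
    [DecidableEq ι] {E : ι → α} {e : ι → ℕ} {s : Finset ι} {i : ι} (hi : Prime (E i))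
    (hirr : ∀ j, Irreducible (E j)) (hdist : ∀ i j, i ≠ j → ¬ Associated (E i) (E j)) :
    ¬ E i ∣ ∏ j ∈ s.erase i, E j ^ e j := fun h => by
  obtain ⟨j, hj, hdvd⟩ := hi.exists_mem_finset_dvd h
  exact hdist i j (Finset.ne_of_mem_erase hj).symm
    (hi.irreducible.associated_of_dvd (hirr j) (hi.dvd_of_dvd_pow hdvd))

lemma dvd_cross_apply_of_dvd_minors {A : Type*} [CommRing A] {z : A} {x G : Fin 3 → A}
    (h : ∀ i j : Fin 3, i < j → z ∣ x i * G j - x j * G i) (l : Fin 3) : z ∣ (x ⨯₃ G) l := by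
  rw [cross_apply]
  fin_cases l
  · exact h 1 2 (by decide)
  · simpa using (h 0 2 (by decide)).neg_right
  · exact h 0 1 (by decide)

lemma Prime.dvd_of_dvd_cross_cross {A : Type*} [CommRing A] {q : A} (hq : Prime q)
    {x a b : Fin 3 → A} (h : ∀ l, q ∣ (x ⨯₃ (a ⨯₃ b)) l) (ha : q ∣ a ⬝ᵥ x) (hb : ¬ q ∣ x ⬝ᵥ b)
    (l : Fin 3) : q ∣ a l := by
  have hdvd : q ∣ (x ⬝ᵥ b) * a l := by
    simpa [cross_cross_eq_smul_sub_smul'] using dvd_add (h l) (dvd_mul_of_dvd_left ha (b l))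
  exact (hq.dvd_or_dvd hdvd).resolve_left hb

namespace MvPolynomial

variable {σ R : Type*}

lemma degreeOf_pderiv_lt [CommSemiring R] {p : MvPolynomial σ R} {i : σ} (h : pderiv i p ≠ 0) :
    degreeOf i (pderiv i p) < degreeOf i p := by
  have hsucc : ∀ m ∈ (pderiv i p).support, m i + 1 ≤ degreeOf i p := fun m hm => by
    have hm' : m + Finsupp.single i 1 ∈ p.support := by
      rw [mem_support_iff, coeff_pderiv] at hm
      exact mem_support_iff.mpr (left_ne_zero_of_mul hm)
    simpa using monomial_le_degreeOf i hm'
  obtain ⟨m, hm⟩ := support_nonempty.mpr h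
  exact (degreeOf_lt_iff (Nat.zero_lt_of_lt (hsucc m hm))).mpr fun m hm => hsucc m hm

lemma pderiv_eq_zero_of_dvd [CommSemiring R] [NoZeroDivisors R] {p : MvPolynomial σ R} {i : σ}
    (hp : p ≠ 0) (h : p ∣ pderiv i p) : pderiv i p = 0 := by
  by_contra hne
  obtain ⟨c, hc⟩ := h
  have hc0 : c ≠ 0 := by rintro rfl; exact hne (by rw [hc, mul_zero])
  have hlt := degreeOf_pderiv_lt hne
  rw [hc, degreeOf_mul_eq hp hc0] at hlt
  omega

lemma eq_C_of_forall_pderiv_eq_zero [CommSemiring R] [NoZeroDivisors R] [CharZero R]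
    {p : MvPolynomial σ R} (h : ∀ i, pderiv i p = 0) : p = C (coeff 0 p) := by
  classical
  ext m
  rw [coeff_C]
  split_ifs with hm
  · rw [hm]
  obtain ⟨i, hi⟩ : ∃ i, m i ≠ 0 := by
    by_contra! hall
    exact hm (Finsupp.ext fun i => (hall i).symm)
  have hm' : m - Finsupp.single i 1 + Finsupp.single i 1 = m :=
    tsub_add_cancel_of_le (Finsupp.single_le_iff.mpr (Nat.one_le_iff_ne_zero.mpr hi))
  have hcoeff := coeff_pderiv (i := i) p (m - Finsupp.single i 1)
  rw [h i, hm', coeff_zero] at hcoeff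
  exact (mul_eq_zero.mp hcoeff.symm).resolve_right (Nat.cast_add_one_ne_zero _)

lemma IsHomogeneous.dotProduct_X_eq_of_reduced_pderiv [CommRing R] [IsDomain R] [Fintype σ]
    {ι : Type*} [Fintype ι] {F : MvPolynomial σ R}
    {E : ι → MvPolynomial σ R} {e : ι → ℕ} {D : σ → MvPolynomial σ R} {n : ℕ}
    (hF : F.IsHomogeneous n) (hE : ∀ i, E i ≠ 0) (hpos : ∀ i, 0 < e i)
    (hfact : F = ∏ i, E i ^ e i) (hD : ∀ j, pderiv j F = (∏ i, E i ^ (e i - 1)) * D j) :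
    D ⬝ᵥ X = n • ∏ i, E i := by
  set G := ∏ i, E i ^ (e i - 1)
  have hsplit : F = G * ∏ i, E i := by
    rw [hfact, ← Finset.prod_mul_distrib]
    exact Finset.prod_congr rfl fun i _ => (pow_sub_one_mul (hpos i).ne' _).symm
  have hG : G ≠ 0 := Finset.prod_ne_zero_iff.mpr fun i _ => pow_ne_zero _ (hE i)
  refine mul_left_cancel₀ hG ?_
  calc G * (D ⬝ᵥ X) = ∑ j, X j * pderiv j F := by
        rw [dotProduct, Finset.mul_sum]
        exact Finset.sum_congr rfl fun j _ => by rw [hD]; ring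
    _ = n • F := hF.sum_X_mul_pderiv
    _ = G * (n • ∏ i, E i) := by rw [hsplit, mul_smul_comm]

variable {k ι : Type*} [Field k] [CharZero k] [Fintype ι]

lemma isUnit_natCast {n : ℕ} (hn : n ≠ 0) : IsUnit (n : MvPolynomial σ k) := by
  rw [← map_natCast C]
  exact (Nat.cast_ne_zero.mpr hn).isUnit.map C

lemma _root_.Irreducible.exists_not_dvd_pderiv {P : MvPolynomial σ k} (hP : Irreducible P) :
    ∃ i, ¬ P ∣ pderiv i P := by
  by_contra! h
  have hC := eq_C_of_forall_pderiv_eq_zero fun i => pderiv_eq_zero_of_dvd hP.ne_zero (h i)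
  rw [hC] at hP
  exact hP.not_isUnit ((Ne.isUnit fun h0 => hP.ne_zero (by rw [h0, C_0])).map C)

lemma dvd_pderiv_self_of_dvd_reduced_pderiv {F : MvPolynomial σ k} {E : ι → MvPolynomial σ k}
    {e : ι → ℕ} {D : σ → MvPolynomial σ k} (hirr : ∀ i, Irreducible (E i)) (hpos : ∀ i, 0 < e i)
    (hdist : ∀ i j, i ≠ j → ¬ Associated (E i) (E j)) (hfact : F = ∏ i, E i ^ e i)
    (hD : ∀ j, pderiv j F = (∏ i, E i ^ (e i - 1)) * D j) {i₀ : ι} (hE : ∀ j, E i₀ ∣ D j)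
    (j : σ) : E i₀ ∣ pderiv j (E i₀) := by
  classical
  have hP : Prime (E i₀) := (hirr i₀).prime
  have hsplit : F = E i₀ ^ e i₀ * ∏ i ∈ Finset.univ.erase i₀, E i ^ e i := by
    rw [hfact, Finset.mul_prod_erase _ (fun i => E i ^ e i) (Finset.mem_univ i₀)]
  have hpow : E i₀ ^ e i₀ ∣ pderiv j (E i₀ ^ e i₀ * ∏ i ∈ Finset.univ.erase i₀, E i ^ e i) := by
    rw [← hsplit, hD j, ← pow_sub_one_mul (hpos i₀).ne']
    exact mul_dvd_mul
      (Finset.dvd_prod_of_mem (fun i => E i ^ (e i - 1)) (Finset.mem_univ i₀)) (hE j)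
  exact hP.dvd_derivation_of_pow_dvd (pderiv j) (hP.not_dvd_prod_erase_pow hirr hdist)
    (fun h => hP.not_isUnit (isUnit_of_dvd_unit h (isUnit_natCast (hpos i₀).ne'))) hpow

end MvPolynomial

lemma detDer_X_s10 {R : Type*} [CommRing R] (a b : Fin 3 → MvPolynomial (Fin 3) R) :
    (fun j => detDer a b (X j)) = a ⨯₃ b := by
  ext1 j
  rw [detDer, mkDerivation_X, cross_apply]
  fin_cases j <;> simp

theorem reduced_derivation_primeTo_general {k : Type*} [Field k] [CharZero k]
    (F₀ : MvPolynomial (Fin 3) k) (H : PowerSeries (MvPolynomial (Fin 3) k))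
    (d : ℕ) (hd : 0 < d)
    (hFhom : ∀ n, (PowerSeries.coeff n
      (PowerSeries.C F₀ + PowerSeries.X * H)).IsHomogeneous d)
    (hF₀ : F₀ ≠ 0)
    (m : ℕ) (E : Fin m → MvPolynomial (Fin 3) k) (e : Fin m → ℕ)
    (hirr : ∀ i, Irreducible (E i)) (hpos : ∀ i, 0 < e i)
    (hdist : ∀ i j, i ≠ j → ¬ Associated (E i) (E j))
    (hfact : F₀ = ∏ i, E i ^ e i)
    (D : Fin 3 → MvPolynomial (Fin 3) k)
    (hD : ∀ j : Fin 3, pderiv j F₀ = (∏ i, E i ^ (e i - 1)) * D j)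
    (hcop : IsRelPrime F₀ (PowerSeries.coeff 0 H)) :
    coeffsPrimeTo
      (fun j => detDer D (fun l => pderiv l (PowerSeries.coeff 0 H)) (X j)) F₀ := by
  set h := PowerSeries.coeff 0 H
  have hF₀hom : F₀.IsHomogeneous d := by simpa using hFhom 0
  have hhom : h.IsHomogeneous d := by simpa [h] using hFhom 1
  intro z hzF hzminors
  by_contra hz
  obtain ⟨q, hq, hqz⟩ := WfDvdMonoid.exists_irreducible_factor hz (ne_zero_of_dvd_ne_zero hF₀ hzF)
  obtain ⟨i, -, hqi⟩ := hq.prime.exists_mem_finset_dvd (hfact ▸ hqz.trans hzF)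
  have hPz : E i ∣ z :=
    (hq.associated_of_dvd (hirr i) (hq.prime.dvd_of_dvd_pow hqi)).symm.dvd.trans hqz
  have hP : Prime (E i) := (hirr i).prime
  rw [detDer_X_s10] at hzminors
  have hPD : ∀ l, E i ∣ D l := by
    refine hP.dvd_of_dvd_cross_cross
      (fun l => hPz.trans (dvd_cross_apply_of_dvd_minors hzminors l)) ?_ ?_
    · rw [hF₀hom.dotProduct_X_eq_of_reduced_pderiv (fun i => (hirr i).ne_zero) hpos hfact hD,
        nsmul_eq_mul]
      exact dvd_mul_of_dvd_right (Finset.dvd_prod_of_mem E (Finset.mem_univ i)) _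
    · rw [show X ⬝ᵥ (fun l => pderiv l h) = d • h from hhom.sum_X_mul_pderiv, nsmul_eq_mul]
      intro hdvd
      rcases hP.dvd_or_dvd hdvd with hPd | hPh
      · exact hP.not_isUnit (isUnit_of_dvd_unit hPd (isUnit_natCast hd.ne'))
      · exact hP.not_isUnit (hcop (hPz.trans hzF) hPh)
  obtain ⟨l, hl⟩ := (hirr i).exists_not_dvd_pderiv
  exact hl (dvd_pderiv_self_of_dvd_reduced_pderiv hirr hpos hdist hfact hD hPD l)

/-- Let `k` be an algebraically closed field of characteristic zero and
`S := k[X₀,X₁,X₂]`.  Let `F(t) = F₀ + t·H(t) ∈ S[[t]]` be homogeneous of positive degree with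
`F₀ ≠ 0`, factorization `F₀ = ∏ᵢ Eᵢ^{eᵢ}` into distinct irreducibles, and
`Dⱼ := ∂ⱼ(F₀)/∏ᵢ Eᵢ^{eᵢ−1}`.  If `gcd(F₀, H(0)) = 1`, then, with
`∂(0) := det[(D₀,D₁,D₂); ∇H(0); ∇]` the reduced `F(t)`-derivation at `t = 0`,
`gcd(∂(0), F₀) = 1`. -/
theorem reduced_derivation_primeTo {k : Type*} [Field k] [IsAlgClosed k] [CharZero k]
    (F₀ : MvPolynomial (Fin 3) k) (H : PowerSeries (MvPolynomial (Fin 3) k))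
    (d : ℕ) (hd : 0 < d)
    (hFhom : ∀ n, (PowerSeries.coeff n
      (PowerSeries.C F₀ + PowerSeries.X * H)).IsHomogeneous d)
    (hF₀ : F₀ ≠ 0)
    (m : ℕ) (E : Fin m → MvPolynomial (Fin 3) k) (e : Fin m → ℕ)
    (hirr : ∀ i, Irreducible (E i)) (hpos : ∀ i, 0 < e i)
    (hdist : ∀ i j, i ≠ j → ¬ Associated (E i) (E j))
    (hfact : F₀ = ∏ i, E i ^ e i)
    (D : Fin 3 → MvPolynomial (Fin 3) k)
    (hD : ∀ j : Fin 3, pderiv j F₀ = (∏ i, E i ^ (e i - 1)) * D j)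
    (hcop : IsRelPrime F₀ (PowerSeries.coeff 0 H)) :
    coeffsPrimeTo
      (fun j => detDer D (fun l => pderiv l (PowerSeries.coeff 0 H)) (X j)) F₀ :=
  reduced_derivation_primeTo_general F₀ H d hd hFhom hF₀ m E e hirr hpos hdist hfact D hD hcop
end
end

section
/- Let k be a field of characteristic zero and S := k[X₀,X₁,X₂]. Let F(t) = F₀ + t·H(t) ∈ S[[t]] be homogeneous of positive degree with F₀ ≠ 0, let F₀ = ∏ⱼ Eⱼ^{eⱼ} be its factorization into distinct irreducibles, set Dⱼ := ∂ⱼ(F₀)/∏ᵢ Eᵢ^{eᵢ−1}, and let ∂(0) := det[(D₀,D₁,D₂); ∇H(0); ∇]. Then for each index i there exists a k-derivation ∂ᵢ of S such that ∂(0) = eᵢ·(∏_{j≠i} Eⱼ)·∂_{Eᵢ,H(0)} + Eᵢ·∂ᵢ. -/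
/-! Write `F₀ = P · ∏ⱼ Eⱼ` with `P = ∏ⱼ Eⱼ ^ (eⱼ - 1)`. The Leibniz rule gives
`∂ₗF₀ = P · ∑ⱼ eⱼ (∏_{r ≠ j} E_r) ∂ₗEⱼ`, so after cancelling `P` the vector `D` is
`∑ⱼ eⱼ (∏_{r ≠ j} E_r) ∇Eⱼ`. Every summand with `j ≠ i` is divisible by `Eᵢ`, so
`D = eᵢ (∏_{r ≠ i} E_r) ∇Eᵢ + Eᵢ · R`, and the claim follows because `det[a; b; ∇]` is linear
in its first row. -/

open MvPolynomial

noncomputable section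

namespace Derivation

variable {ι R A : Type*} [CommSemiring R] [CommSemiring A] [Algebra R A] [DecidableEq ι]

theorem leibniz_prod (δ : Derivation R A A) (s : Finset ι) (f : ι → A) :
    δ (∏ l ∈ s, f l) = ∑ l ∈ s, (∏ r ∈ s.erase l, f r) * δ (f l) := by
  induction s using Finset.induction with
  | empty => simp
  | insert a s ha ih =>
    rw [Finset.prod_insert ha, leibniz, smul_eq_mul, smul_eq_mul, ih, Finset.sum_insert ha,
      Finset.erase_insert ha, Finset.mul_sum, add_comm]
    congr 1
    refine Finset.sum_congr rfl fun l hl => ?_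
    rw [Finset.erase_insert_of_ne (by rintro rfl; exact ha hl),
      Finset.prod_insert (fun h => ha (Finset.erase_subset _ _ h))]
    ring

theorem leibniz_prod_pow (δ : Derivation R A A) (s : Finset ι) (f : ι → A) (n : ι → ℕ)
    (hn : ∀ l ∈ s, 0 < n l) :
    δ (∏ l ∈ s, f l ^ n l) =
      (∏ l ∈ s, f l ^ (n l - 1)) * ∑ l ∈ s, (n l : A) * (∏ r ∈ s.erase l, f r) * δ (f l) := by
  rw [leibniz_prod, Finset.mul_sum]
  refine Finset.sum_congr rfl fun l hl => ?_
  have hpow : ∏ r ∈ s.erase l, f r ^ n r =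
      (∏ r ∈ s.erase l, f r ^ (n r - 1)) * ∏ r ∈ s.erase l, f r := by
    rw [← Finset.prod_mul_distrib]
    refine Finset.prod_congr rfl fun r hr => ?_
    rw [← pow_succ, Nat.sub_add_cancel (hn r (Finset.mem_of_mem_erase hr))]
  rw [leibniz_pow, hpow, ← Finset.mul_prod_erase s _ hl, nsmul_eq_mul, smul_eq_mul]
  ring

end Derivation

theorem Finset.sum_mul_prod_erase_mul_eq {ι A : Type*} [CommSemiring A] [DecidableEq ι]
    {s : Finset ι} {i : ι} (hi : i ∈ s) (c f g : ι → A) :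
    ∑ l ∈ s, c l * (∏ r ∈ s.erase l, f r) * g l =
      c i * (∏ r ∈ s.erase i, f r) * g i +
        f i * ∑ l ∈ s.erase i, c l * (∏ r ∈ (s.erase i).erase l, f r) * g l := by
  rw [← Finset.add_sum_erase _ _ hi, Finset.mul_sum]
  congr 1
  refine Finset.sum_congr rfl fun l hl => ?_
  have hil : i ∈ s.erase l := Finset.mem_erase.2 ⟨(Finset.ne_of_mem_erase hl).symm, hi⟩
  rw [← Finset.mul_prod_erase _ _ hil, Finset.erase_right_comm]
  ring

theorem detDer_add_mul_left {R : Type*} [CommRing R] (p q : MvPolynomial (Fin 3) R)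
    (a b c : Fin 3 → MvPolynomial (Fin 3) R) :
    detDer (fun j => p * a j + q * b j) c = p • detDer a c + q • detDer b c := by
  refine MvPolynomial.derivation_ext fun j => ?_
  fin_cases j <;>
  · simp only [detDer, Derivation.add_apply, Derivation.smul_apply, mkDerivation_X, smul_eq_mul,
      Fin.zero_eta, Fin.mk_one, Fin.reduceFinMk, Matrix.cons_val_zero, Matrix.cons_val_one,
      Matrix.cons_val]
    ring

theorem reduced_derivation_decomposition_general {k : Type*} [Field k]
    (F₀ : MvPolynomial (Fin 3) k) (H : PowerSeries (MvPolynomial (Fin 3) k))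
    (m : ℕ) (E : Fin m → MvPolynomial (Fin 3) k) (e : Fin m → ℕ)
    (hirr : ∀ i, Irreducible (E i)) (hpos : ∀ i, 0 < e i)
    (hfact : F₀ = ∏ i, E i ^ e i)
    (D : Fin 3 → MvPolynomial (Fin 3) k)
    (hD : ∀ j : Fin 3, pderiv j F₀ = (∏ i, E i ^ (e i - 1)) * D j) :
    ∀ i : Fin m, ∃ Di : Derivation k (MvPolynomial (Fin 3) k) (MvPolynomial (Fin 3) k),
      detDer D (fun l => pderiv l (PowerSeries.coeff 0 H))
        = ((e i : MvPolynomial (Fin 3) k) * ∏ j ∈ Finset.univ.erase i, E j) •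
            delPQ (E i) (PowerSeries.coeff 0 H) + E i • Di := by
  intro i
  have hcancel : (∏ l, E l ^ (e l - 1)) ≠ 0 :=
    Finset.prod_ne_zero_iff.2 fun l _ => pow_ne_zero _ (hirr l).ne_zero
  have hD_eq : ∀ j, D j = ∑ l, (e l : MvPolynomial (Fin 3) k) *
      (∏ r ∈ Finset.univ.erase l, E r) * pderiv j (E l) := fun j =>
    mul_left_cancel₀ hcancel <| by
      rw [← hD, hfact, (pderiv j).leibniz_prod_pow _ _ _ fun l _ => hpos l]
  refine ⟨detDer (fun j => ∑ l ∈ Finset.univ.erase i, (e l : MvPolynomial (Fin 3) k) *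
      (∏ r ∈ (Finset.univ.erase i).erase l, E r) * pderiv j (E l))
    (fun l => pderiv l (PowerSeries.coeff 0 H)), ?_⟩
  rw [delPQ, ← detDer_add_mul_left]
  congr 1
  funext j
  rw [hD_eq, Finset.sum_mul_prod_erase_mul_eq (Finset.mem_univ i)]

/-- Let `k` be a field of characteristic zero and `S := k[X₀,X₁,X₂]`.  Let
`F(t) = F₀ + t·H(t) ∈ S[[t]]` be homogeneous of positive degree with `F₀ ≠ 0`, factorization
`F₀ = ∏ⱼ Eⱼ^{eⱼ}` into distinct irreducibles, `Dⱼ := ∂ⱼ(F₀)/∏ᵢ Eᵢ^{eᵢ−1}`, and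
`∂(0) := det[(D₀,D₁,D₂); ∇H(0); ∇]`.  Then for each index `i` there is a `k`-derivation `∂ᵢ`
of `S` with `∂(0) = eᵢ·(∏_{j≠i} Eⱼ)·∂_{Eᵢ,H(0)} + Eᵢ·∂ᵢ`. -/
theorem reduced_derivation_decomposition {k : Type*} [Field k] [CharZero k]
    (F₀ : MvPolynomial (Fin 3) k) (H : PowerSeries (MvPolynomial (Fin 3) k))
    (d : ℕ) (hd : 0 < d)
    (hFhom : ∀ n, (PowerSeries.coeff n
      (PowerSeries.C F₀ + PowerSeries.X * H)).IsHomogeneous d)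
    (hF₀ : F₀ ≠ 0)
    (m : ℕ) (E : Fin m → MvPolynomial (Fin 3) k) (e : Fin m → ℕ)
    (hirr : ∀ i, Irreducible (E i)) (hpos : ∀ i, 0 < e i)
    (hdist : ∀ i j, i ≠ j → ¬ Associated (E i) (E j))
    (hfact : F₀ = ∏ i, E i ^ e i)
    (D : Fin 3 → MvPolynomial (Fin 3) k)
    (hD : ∀ j : Fin 3, pderiv j F₀ = (∏ i, E i ^ (e i - 1)) * D j) :
    ∀ i : Fin m, ∃ Di : Derivation k (MvPolynomial (Fin 3) k) (MvPolynomial (Fin 3) k),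
      detDer D (fun l => pderiv l (PowerSeries.coeff 0 H))
        = ((e i : MvPolynomial (Fin 3) k) * ∏ j ∈ Finset.univ.erase i, E j) •
            delPQ (E i) (PowerSeries.coeff 0 H) + E i • Di :=
  reduced_derivation_decomposition_general F₀ H m E e hirr hpos hfact D hD
end
end

section
/- Let k be a field of characteristic zero, S := k[X₀,X₁,X₂], and K := Frac(S). Let F(t) := E²A + Σ_{i≥1} Fᵢtⁱ ∈ S[[t]] be a homogeneous power series of positive degree, where E, A ∈ S are squarefree, homogeneous and coprime. Let E_j be an irreducible factor of E and set B_j := E²A/E_j² ∈ S. Define Δ_{1,j} := F₁ and, for n ≥ 0, Δ_{n+2,j} := B_j^{n+1}·F_{n+2} − Σ_{i+r=n+2, i,r≥1} (Δ_{i,j}/(2E_j))·(Δ_{r,j}/(2E_j)), elements of K. Then for every integer n ≥ 0, in K[[t]] one has B_j^{2n+1}·F(t) ≡ (E_j·B_j^{n+1} + Σ_{i=1}^{n+1} (Δ_{i,j}/(2E_j))·B_j^{n+1−i}·tⁱ)² + B_j^{n}·Δ_{n+2,j}·t^{n+2} modulo t^{n+3}. -/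
/-!
Put `δ₀ := Eⱼ` and `δᵢ := Δᵢ/(2Eⱼ)` for `i ≥ 1`. The recursion defining the `Δᵢ` says exactly
that `Σ_{i+r=m} δᵢδᵣ = B^{m-1}Fₘ` for `m ≥ 1`, and `B δ₀² = F₀`; that is, `Σ δᵢtⁱ` is a square
root of `F(Bt)/B`. The polynomial `B^{n+1} Σ_{i ≤ n+1} δᵢ(t/B)ⁱ` therefore squares to
`B^{2n+1}F` up to degree `n+1`, and in degree `n+2` it misses only the cross term
`2δ₀δ_{n+2}Bⁿ = BⁿΔ_{n+2}`. This is a formal identity over any commutative ring once `Δᵢ` is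
written as `2Eⱼδᵢ`.
-/

open PowerSeries

theorem Finset.sum_Icc_one_eq_sum_range {M : Type*} [AddCommMonoid M] (m : ℕ) (f : ℕ → M) :
    ∑ i ∈ Finset.Icc 1 m, f i = ∑ i ∈ Finset.range m, f (i + 1) := by
  rw [← Finset.Ico_add_one_right_eq_Icc, Finset.sum_Ico_eq_sum_range]
  simp [add_comm]

namespace PowerSeries

theorem coeff_succ_sq {R : Type*} [CommSemiring R] (f : R⟦X⟧) (m : ℕ) :
    coeff (m + 1) (f ^ 2) = 2 * coeff 0 f * coeff (m + 1) f
      + ∑ i ∈ Finset.Icc 1 m, coeff i f * coeff (m + 1 - i) f := by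
  rw [sq, coeff_mul, Finset.Nat.sum_antidiagonal_eq_sum_range_succ_mk, Finset.sum_range_succ,
    Finset.sum_range_succ', Finset.sum_Icc_one_eq_sum_range]
  simp only [Nat.sub_zero, Nat.sub_self]
  ring

variable {R : Type*} [CommRing R] (e b : R) (δ : ℕ → R) (n : ℕ)

noncomputable def rootApprox : R⟦X⟧ :=
  C (e * b ^ (n + 1)) + ∑ i ∈ Finset.Icc 1 (n + 1), C (δ i * b ^ (n + 1 - i)) * X ^ i

theorem coeff_rootApprox (i : ℕ) : coeff i (rootApprox e b δ n) =
    (if i = 0 then e * b ^ (n + 1) else 0)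
      + if i ∈ Finset.Icc 1 (n + 1) then δ i * b ^ (n + 1 - i) else 0 := by
  simp only [rootApprox, map_add, map_sum, coeff_C, coeff_C_mul_X_pow, Finset.sum_ite_eq]

theorem coeff_zero_rootApprox : coeff 0 (rootApprox e b δ n) = e * b ^ (n + 1) := by
  simp [coeff_rootApprox]

theorem coeff_rootApprox_of_mem_Icc {i : ℕ} (hi : i ∈ Finset.Icc 1 (n + 1)) :
    coeff i (rootApprox e b δ n) = δ i * b ^ (n + 1 - i) := by
  have hi0 : i ≠ 0 := by rw [Finset.mem_Icc] at hi; omega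
  simp [coeff_rootApprox, hi0, hi]

theorem coeff_rootApprox_of_lt {i : ℕ} (hi : n + 1 < i) : coeff i (rootApprox e b δ n) = 0 := by
  have hi' : i ∉ Finset.Icc 1 (n + 1) := by rw [Finset.mem_Icc]; omega
  simp [coeff_rootApprox, hi', show i ≠ 0 by omega]

theorem sum_Icc_coeff_mul_coeff_rootApprox {j : ℕ} (hj : j ≤ n + 1) :
    ∑ i ∈ Finset.Icc 1 j,
        coeff i (rootApprox e b δ n) * coeff (j + 1 - i) (rootApprox e b δ n)
      = b ^ (2 * n + 1 - j) * ∑ i ∈ Finset.Icc 1 j, δ i * δ (j + 1 - i) := by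
  rw [Finset.mul_sum]
  refine Finset.sum_congr rfl fun i hi => ?_
  rw [Finset.mem_Icc] at hi
  rw [coeff_rootApprox_of_mem_Icc e b δ n (Finset.mem_Icc.2 ⟨by omega, by omega⟩),
    coeff_rootApprox_of_mem_Icc e b δ n (Finset.mem_Icc.2 ⟨by omega, by omega⟩),
    show 2 * n + 1 - j = (n + 1 - i) + (n + 1 - (j + 1 - i)) by omega, pow_add]
  ring

theorem X_pow_dvd_sub_sq_rootApprox (G : R⟦X⟧) (h0 : coeff 0 G = e ^ 2 * b)
    (hδ : ∀ j, 2 * e * δ (j + 1) + ∑ i ∈ Finset.Icc 1 j, δ i * δ (j + 1 - i)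
      = b ^ j * coeff (j + 1) G) :
    X ^ (n + 3) ∣ C b ^ (2 * n + 1) * G
      - (rootApprox e b δ n ^ 2 + C (b ^ n * (2 * e * δ (n + 2))) * X ^ (n + 2)) := by
  rw [X_pow_dvd_iff]
  rintro (_ | j) hj
  · rw [← map_pow, map_sub, map_add, coeff_C_mul, coeff_C_mul_X_pow, if_neg (by omega), h0,
      coeff_zero_eq_constantCoeff_apply, map_pow, ← coeff_zero_eq_constantCoeff_apply,
      coeff_zero_rootApprox]
    ring
  rw [← map_pow, map_sub, map_add, coeff_C_mul, coeff_C_mul_X_pow, coeff_succ_sq,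
    coeff_zero_rootApprox, sum_Icc_coeff_mul_coeff_rootApprox e b δ n (by omega), sub_eq_zero]
  rcases Nat.lt_or_ge j (n + 1) with hjn | hjn
  · obtain ⟨k, rfl⟩ := Nat.exists_eq_add_of_le (Nat.lt_succ_iff.mp hjn)
    rw [coeff_rootApprox_of_mem_Icc e b δ _ (Finset.mem_Icc.2 ⟨by omega, by omega⟩),
      if_neg (by omega), show j + k + 1 - (j + 1) = k by omega,
      show 2 * (j + k) + 1 - j = j + 2 * k + 1 by omega]
    linear_combination (-b ^ (j + 2 * k + 1)) * hδ j
  · obtain rfl : j = n + 1 := by omega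
    have hδ' : 2 * e * δ (n + 2) + _ = _ := hδ (n + 1)
    rw [coeff_rootApprox_of_lt e b δ n (by omega), if_pos rfl,
      show 2 * n + 1 - (n + 1) = n by omega]
    linear_combination (-b ^ n) * hδ'

end PowerSeries

theorem zeuthen_discriminant_congruence_general {k : Type*} [Field k] [CharZero k]
    (F : PowerSeries (MvPolynomial (Fin 3) k))
    (E A : MvPolynomial (Fin 3) k)
    (hF0 : PowerSeries.coeff 0 F = E ^ 2 * A)
    (Ej : MvPolynomial (Fin 3) k) (hEj : Irreducible Ej)
    (B : MvPolynomial (Fin 3) k) (hB : Ej ^ 2 * B = E ^ 2 * A)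
    (Δ : ℕ → FractionRing (MvPolynomial (Fin 3) k))
    (φ : MvPolynomial (Fin 3) k →+* FractionRing (MvPolynomial (Fin 3) k))
    (hφ : φ = algebraMap _ _)
    (hΔ1 : Δ 1 = φ (PowerSeries.coeff 1 F))
    (hΔrec : ∀ n : ℕ, Δ (n + 2) =
      φ B ^ (n + 1) * φ (PowerSeries.coeff (n + 2) F)
        - ∑ i ∈ Finset.Icc 1 (n + 1),
            (Δ i / (2 * φ Ej)) * (Δ (n + 2 - i) / (2 * φ Ej))) :
    ∀ n : ℕ,
      (PowerSeries.X : PowerSeries (FractionRing (MvPolynomial (Fin 3) k))) ^ (n + 3) ∣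
        (PowerSeries.C (φ B) ^ (2 * n + 1) * PowerSeries.map φ F
          - ((PowerSeries.C (φ Ej * φ B ^ (n + 1))
              + ∑ i ∈ Finset.Icc 1 (n + 1),
                  PowerSeries.C ((Δ i / (2 * φ Ej)) * φ B ^ (n + 1 - i)) *
                    PowerSeries.X ^ i) ^ 2
            + PowerSeries.C (φ B ^ n * Δ (n + 2)) * PowerSeries.X ^ (n + 2))) := by
  intro n
  have hφEj : φ Ej ≠ 0 := by
    subst hφ
    exact (map_ne_zero_iff _ (IsFractionRing.injective _ _)).2 hEj.ne_zero
  set δ := fun i => Δ i / (2 * φ Ej)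
  have hΔδ (i : ℕ) : Δ i = 2 * φ Ej * δ i :=
    (mul_div_cancel₀ _ (by simpa using hφEj)).symm
  have h0 : coeff 0 (map φ F) = φ Ej ^ 2 * φ B := by
    rw [coeff_map, hF0, ← hB, map_mul, map_pow]
  have hδ (j : ℕ) : 2 * φ Ej * δ (j + 1) + ∑ i ∈ Finset.Icc 1 j, δ i * δ (j + 1 - i)
      = φ B ^ j * coeff (j + 1) (map φ F) := by
    rcases j with _ | j
    · simp [← hΔδ, hΔ1]
    · rw [← hΔδ, hΔrec j, coeff_map]
      ring
  rw [hΔδ (n + 2)]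
  exact X_pow_dvd_sub_sq_rootApprox (φ Ej) (φ B) δ n _ h0 hδ

/-- Lemma 5.1.1: Let `k` be a field of characteristic zero,
`S := k[X₀,X₁,X₂]`, `K := Frac S`.  Let `F(t) = E²A + Σ_{i≥1} Fᵢtⁱ ∈ S[[t]]` be a homogeneous
power series of positive degree, `E, A` squarefree homogeneous and coprime, `E_j` an
irreducible factor of `E`, `B_j := E²A/E_j²`, and let `Δ_{i,j} ∈ K` be the discriminants,
defined by `Δ_{1,j} := F₁` and
`Δ_{n+2,j} := B_j^{n+1}F_{n+2} − Σ_{i+r=n+2, i,r≥1}(Δ_{i,j}/(2E_j))(Δ_{r,j}/(2E_j))`.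
Then for every `n ≥ 0`, in `K[[t]]`,
`B_j^{2n+1}F(t) ≡ (E_jB_j^{n+1} + Σ_{i=1}^{n+1}(Δ_{i,j}/(2E_j))B_j^{n+1−i}tⁱ)²
  + B_j^nΔ_{n+2,j}t^{n+2}  (mod t^{n+3})`. -/
theorem zeuthen_discriminant_congruence {k : Type*} [Field k] [CharZero k]
    (F : PowerSeries (MvPolynomial (Fin 3) k)) (d : ℕ) (hd : 0 < d)
    (hFhom : ∀ n, (PowerSeries.coeff n F).IsHomogeneous d)
    (E A : MvPolynomial (Fin 3) k) (dE dA : ℕ)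
    (hEhom : E.IsHomogeneous dE) (hAhom : A.IsHomogeneous dA)
    (hEsf : Squarefree E) (hAsf : Squarefree A) (hEA : IsRelPrime E A)
    (hF0 : PowerSeries.coeff 0 F = E ^ 2 * A)
    (Ej : MvPolynomial (Fin 3) k) (hEj : Irreducible Ej) (hEjE : Ej ∣ E)
    (B : MvPolynomial (Fin 3) k) (hB : Ej ^ 2 * B = E ^ 2 * A)
    (Δ : ℕ → FractionRing (MvPolynomial (Fin 3) k))
    (φ : MvPolynomial (Fin 3) k →+* FractionRing (MvPolynomial (Fin 3) k))
    (hφ : φ = algebraMap _ _)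
    (hΔ1 : Δ 1 = φ (PowerSeries.coeff 1 F))
    (hΔrec : ∀ n : ℕ, Δ (n + 2) =
      φ B ^ (n + 1) * φ (PowerSeries.coeff (n + 2) F)
        - ∑ i ∈ Finset.Icc 1 (n + 1),
            (Δ i / (2 * φ Ej)) * (Δ (n + 2 - i) / (2 * φ Ej))) :
    ∀ n : ℕ,
      (PowerSeries.X : PowerSeries (FractionRing (MvPolynomial (Fin 3) k))) ^ (n + 3) ∣
        (PowerSeries.C (φ B) ^ (2 * n + 1) * PowerSeries.map φ F
          - ((PowerSeries.C (φ Ej * φ B ^ (n + 1))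
              + ∑ i ∈ Finset.Icc 1 (n + 1),
                  PowerSeries.C ((Δ i / (2 * φ Ej)) * φ B ^ (n + 1 - i)) *
                    PowerSeries.X ^ i) ^ 2
            + PowerSeries.C (φ B ^ n * Δ (n + 2)) * PowerSeries.X ^ (n + 2))) :=
  zeuthen_discriminant_congruence_general F E A hF0 Ej hEj B hB Δ φ hφ hΔ1 hΔrec
end

section
/- Let k be a field of characteristic zero and S := k[X₀,X₁,X₂]. Let F(t) := E²A + Σ_{i≥1} Fᵢtⁱ ∈ S[[t]] be a homogeneous power series of positive degree, where E, A ∈ S are squarefree, homogeneous and coprime; let E_j be an irreducible factor of E and B_j := E²A/E_j² ∈ S. Suppose there exist Δ'₁, Δ'₂, … ∈ S with E_j·Δ'₁ = F₁ and, for all n ≥ 0, E_j·Δ'_{n+2} = B_j^{n+1}·F_{n+2} − Σ_{i+r=n+2, i,r≥1} (Δ'ᵢ/2)·(Δ'_r/2) (i.e., F(t) fails to be of type n for E_j for every n, all discriminants Δ_{n,j} being divisible by E_j). Then in R[[t]], where R is the localization of S away from B_j, one has B_j·F(t) = (E_j·B_j + Σ_{i≥1} (Δ'ᵢ/2)·B_j^{1−i}·tⁱ)²;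 in particular B_j·F(t) is a square in R[[t]], so the generic curve F* = 0 is not reduced on the open set B_j ≠ 0. -/
/-! With `δᵢ := Δ'ᵢ / 2` and `D(t) := E_j + Σ_{i≥1} δᵢ tⁱ`, the recursion says exactly that
`B_j · D(t)² = F(B_j t)`: both sides have `t`-coefficients `B_j^n F_n`.  Once `B_j` is inverted,
substituting `t ↦ t / B_j` gives `B_j · F(t) = (B_j · D(t / B_j))²`, and `B_j · D(t / B_j)` is the
displayed series. -/

namespace PowerSeries

variable {R : Type*} [CommSemiring R]

theorem rescale_C (a r : R) : rescale a (C r) = C r := by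
  ext (_ | n) <;> simp [coeff_C]

theorem coeff_sq_mk_succ (f : ℕ → R) (n : ℕ) :
    coeff n ((mk fun i => f (i + 1)) ^ 2) = ∑ i ∈ Finset.Icc 1 (n + 1), f i * f (n + 2 - i) := by
  rw [sq, coeff_mul, Finset.Nat.sum_antidiagonal_eq_sum_range_succ_mk,
    ← Finset.Ico_add_one_right_eq_Icc, Finset.sum_Ico_eq_sum_range]
  refine Finset.sum_congr rfl fun i hi => ?_
  rw [Finset.mem_range] at hi
  rw [coeff_mk, coeff_mk, add_comm 1 i, show n + 2 - (i + 1) = n - i + 1 by omega]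

theorem C_mul_sq_C_add_X_mul_eq_rescale (F P : R⟦X⟧) (e b : R)
    (h0 : coeff 0 F = e ^ 2 * b) (h1 : coeff 1 F = 2 * e * coeff 0 P)
    (hrec : ∀ n, b ^ (n + 1) * coeff (n + 2) F = 2 * e * coeff (n + 1) P + coeff n (P ^ 2)) :
    C b * (C e + X * P) ^ 2 = rescale b F := by
  have hsq : (C e + X * P) ^ 2 = C (e ^ 2) + X * (C (2 * e) * P + X * P ^ 2) := by
    simp only [map_pow, map_mul, map_ofNat]; ring
  ext n
  rw [hsq, coeff_C_mul, coeff_rescale, map_add, coeff_C]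
  rcases n with _ | _ | n
  · simp [h0, mul_comm]
  · simp [h1, mul_comm]
  · rw [if_neg (Nat.add_one_ne_zero _), zero_add, coeff_succ_X_mul, map_add, coeff_C_mul,
      coeff_succ_X_mul, ← hrec]
    ring

theorem C_mul_eq_sq_of_C_mul_sq_eq_rescale {F D : R⟦X⟧} {b u : R} (hbu : b * u = 1)
    (h : C b * D ^ 2 = rescale b F) : C b * F = (C b * rescale u D) ^ 2 := by
  have h' := congrArg (rescale u) h
  rw [map_mul, map_pow, rescale_C, rescale_rescale, hbu, rescale_one, RingHom.id_apply] at h'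
  rw [← h']
  ring

theorem C_mul_rescale_C_add_X_mul {b u : R} (hbu : b * u = 1) (e : R) (P : R⟦X⟧) :
    C b * rescale u (C e + X * P) = C (b * e) + X * rescale u P := by
  ext (_ | n) <;>
    simp only [coeff_C_mul, coeff_rescale, map_add, coeff_C, coeff_zero_X_mul, coeff_succ_X_mul]
  · simp
  · simp [pow_succ', ← mul_assoc, hbu]

end PowerSeries

open PowerSeries

theorem not_of_any_type_implies_square_general {k : Type*} [Field k] [CharZero k]
    (F : PowerSeries (MvPolynomial (Fin 3) k))
    (E A : MvPolynomial (Fin 3) k)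
    (hF0 : PowerSeries.coeff 0 F = E ^ 2 * A)
    (Ej : MvPolynomial (Fin 3) k)
    (B : MvPolynomial (Fin 3) k) (hB : Ej ^ 2 * B = E ^ 2 * A)
    (Δ' : ℕ → MvPolynomial (Fin 3) k)
    (hΔ'1 : Ej * Δ' 1 = PowerSeries.coeff 1 F)
    (hΔ'rec : ∀ n : ℕ, Ej * Δ' (n + 2) =
      B ^ (n + 1) * PowerSeries.coeff (n + 2) F
        - ∑ i ∈ Finset.Icc 1 (n + 1),
            ((2 : k)⁻¹ • Δ' i) * ((2 : k)⁻¹ • Δ' (n + 2 - i))) :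
    PowerSeries.C (R := Localization.Away B) (algebraMap _ _ B) *
        PowerSeries.map (algebraMap _ (Localization.Away B)) F =
      (PowerSeries.mk fun i =>
        if i = 0 then algebraMap _ (Localization.Away B) (Ej * B)
        else algebraMap _ (Localization.Away B) ((2 : k)⁻¹ • Δ' i) *
          (IsLocalization.Away.invSelf (S := Localization.Away B) B) ^ (i - 1)) ^ 2 ∧
    IsSquare (PowerSeries.C (R := Localization.Away B) (algebraMap _ _ B) *
        PowerSeries.map (algebraMap _ (Localization.Away B)) F) := by
  set φ := algebraMap (MvPolynomial (Fin 3) k) (Localization.Away B)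
  set u := IsLocalization.Away.invSelf (S := Localization.Away B) B
  set δ : ℕ → MvPolynomial (Fin 3) k := fun i => (2 : k)⁻¹ • Δ' i
  have h2δ (i : ℕ) : 2 * δ i = Δ' i := by
    rw [mul_smul_comm, two_mul, ← two_smul k, smul_smul, inv_mul_cancel₀ two_ne_zero, one_smul]
  set D := C Ej + X * mk fun i => δ (i + 1)
  have hD : PowerSeries.C B * D ^ 2 = rescale B F := by
    refine C_mul_sq_C_add_X_mul_eq_rescale F _ Ej B (hF0.trans hB.symm) ?_ fun n => ?_
    · rw [← hΔ'1, coeff_mk, mul_comm 2 Ej, mul_assoc, h2δ]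
    · rw [coeff_mk, coeff_sq_mk_succ, mul_comm 2 Ej, mul_assoc, h2δ, ← sub_eq_iff_eq_add', hΔ'rec,
        sub_sub_cancel]
  have hDφ : C (φ B) * (D.map φ) ^ 2 = rescale (φ B) (F.map φ) := by
    rw [rescale_map, ← hD, map_mul, map_pow, map_C]
  have hBu : φ B * u = 1 := IsLocalization.Away.mul_invSelf B
  have hsq := C_mul_eq_sq_of_C_mul_sq_eq_rescale hBu hDφ
  have hroot : C (φ B) * rescale u (D.map φ) = mk fun i =>
      if i = 0 then φ (Ej * B) else φ (δ i) * u ^ (i - 1) := by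
    rw [map_add, map_mul, map_C, map_X, C_mul_rescale_C_add_X_mul hBu]
    ext (_ | i) <;> simp [mul_comm]
  rw [hroot] at hsq
  exact ⟨hsq, hsq ▸ IsSquare.sq _⟩

/-- Let `k` be a field of characteristic zero and `S := k[X₀,X₁,X₂]`.  Let
`F(t) = E²A + Σ_{i≥1} Fᵢtⁱ ∈ S[[t]]` be homogeneous of positive degree, with `E, A`
squarefree homogeneous and coprime, `E_j` an irreducible factor of `E` and `B_j := E²A/E_j²`.
Suppose there are `Δ'₁, Δ'₂, … ∈ S` with `E_j·Δ'₁ = F₁` and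
`E_j·Δ'_{n+2} = B_j^{n+1}F_{n+2} − Σ_{i+r=n+2, i,r≥1}(Δ'ᵢ/2)(Δ'_r/2)` (i.e. `F(t)` is not of
type `n` for `E_j` for any `n`: every discriminant is divisible by `E_j`).  Then, in
`R[[t]]` with `R := S[1/B_j]`, one has
`B_j·F(t) = (E_j·B_j + Σ_{i≥1}(Δ'ᵢ/2)·B_j^{1−i}·tⁱ)²`; in particular `B_j·F(t)` is a square
in `R[[t]]`, so the generic curve `F* = 0` is not reduced on the open set `B_j ≠ 0`. -/
theorem not_of_any_type_implies_square {k : Type*} [Field k] [CharZero k]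
    (F : PowerSeries (MvPolynomial (Fin 3) k)) (d : ℕ) (hd : 0 < d)
    (hFhom : ∀ n, (PowerSeries.coeff n F).IsHomogeneous d)
    (E A : MvPolynomial (Fin 3) k) (dE dA : ℕ)
    (hEhom : E.IsHomogeneous dE) (hAhom : A.IsHomogeneous dA)
    (hEsf : Squarefree E) (hAsf : Squarefree A) (hEA : IsRelPrime E A)
    (hF0 : PowerSeries.coeff 0 F = E ^ 2 * A)
    (Ej : MvPolynomial (Fin 3) k) (hEj : Irreducible Ej) (hEjE : Ej ∣ E)
    (B : MvPolynomial (Fin 3) k) (hB : Ej ^ 2 * B = E ^ 2 * A)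
    (Δ' : ℕ → MvPolynomial (Fin 3) k)
    (hΔ'1 : Ej * Δ' 1 = PowerSeries.coeff 1 F)
    (hΔ'rec : ∀ n : ℕ, Ej * Δ' (n + 2) =
      B ^ (n + 1) * PowerSeries.coeff (n + 2) F
        - ∑ i ∈ Finset.Icc 1 (n + 1),
            ((2 : k)⁻¹ • Δ' i) * ((2 : k)⁻¹ • Δ' (n + 2 - i))) :
    PowerSeries.C (R := Localization.Away B) (algebraMap _ _ B) *
        PowerSeries.map (algebraMap _ (Localization.Away B)) F =
      (PowerSeries.mk fun i =>
        if i = 0 then algebraMap _ (Localization.Away B) (Ej * B)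
        else algebraMap _ (Localization.Away B) ((2 : k)⁻¹ • Δ' i) *
          (IsLocalization.Away.invSelf (S := Localization.Away B) B) ^ (i - 1)) ^ 2 ∧
    IsSquare (PowerSeries.C (R := Localization.Away B) (algebraMap _ _ B) *
        PowerSeries.map (algebraMap _ (Localization.Away B)) F) :=
  not_of_any_type_implies_square_general F E A hF0 Ej B hB Δ' hΔ'1 hΔ'rec
end
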